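/- Let k ≥ 3 and n, m ∈ ℕ. If an integer t with T_n ≤ t < T_{n+1} appears as a component of some position in P_m, then m = n; that is, an integer in the interval [T_n, T_{n+1}) appears as a component in P_m for no m ≠ n. -/

import Mathlib

/-- `T n` is the `n`-th triangular number `n(n+1)/2`. -/
def T (n : ℕ) : ℕ := n * (n + 1) / 2

/-- `Pset k n` is the set `Pₙ` of positions `(T n, m₁, …, m_{k-1})` (nondecreasing
`k`-tuples) whose first component is `T n` and whose remaining components sum to
`(k-1)·T n + n` (each of them is automatically `≥ T n` by monotonicity). -/
def Pset (k : ℕ) [NeZero k] (n : ℕ) : Set (Fin k → ℕ) :=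
  {u | Monotone u ∧ u 0 = T n ∧
    ∑ i ∈ Finset.univ.erase 0, u i = (k - 1) * T n + n}

/-- A raw move of the `k`-heap game (before re-sorting): either (i) remove a positive
number of tokens from at least one and at most `k-1` heaps, or (ii) remove the same
positive number `t` of tokens from all `k` heaps (`t` at most the smallest heap). -/
def MoveRaw (k : ℕ) (u w : Fin k → ℕ) : Prop :=
  ((∀ i, w i ≤ u i) ∧ u ≠ w ∧
    (Finset.univ.filter fun i => w i < u i).card ≤ k - 1)
  ∨ (∃ t > 0, ∀ i, u i = w i + t)

/-- `v` is a follower of `u`: `v` is obtained from `u` by one move, with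
the components re-sorted into nondecreasing order. -/
def Follower (k : ℕ) (u v : Fin k → ℕ) : Prop :=
  ∃ w : Fin k → ℕ, MoveRaw k u w ∧ Monotone v ∧ ∃ σ : Equiv.Perm (Fin k), v = w ∘ σ

/-!
The components of a position in `Pₘ` other than the first sum to `(k-1)·T m + m` and are each
at least `T m`, so none exceeds `T m + m = T (m+1) - 1`. Hence every component of a position in
`Pₘ` lies in `[T m, T (m+1))`, and these intervals are disjoint for distinct `m`.
-/

lemma two_mul_T (n : ℕ) : 2 * T n = n * (n + 1) :=
  Nat.mul_div_cancel' (Nat.even_mul_succ_self n).two_dvd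

lemma T_succ (n : ℕ) : T (n + 1) = T n + (n + 1) := by
  have h := two_mul_T n
  have h' := two_mul_T (n + 1)
  linarith

lemma T_mono : Monotone T := fun _ _ h =>
  Nat.div_le_div_right (Nat.mul_le_mul h (Nat.succ_le_succ h))

lemma Monotone.eq_of_mem_Ico {α : Type*} [Preorder α] {f : ℕ → α} (hf : Monotone f)
    {m n : ℕ} {x : α} (hm : x ∈ Set.Ico (f m) (f (m + 1)))
    (hn : x ∈ Set.Ico (f n) (f (n + 1))) : m = n := by
  refine le_antisymm (not_lt.1 fun h => ?_) (not_lt.1 fun h => ?_)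
  · exact (hf h).not_gt (hn.2.trans_le' hm.1)
  · exact (hf h).not_gt (hm.2.trans_le' hn.1)

lemma Finset.le_add_of_sum_eq_card_nsmul_add {ι M : Type*} [DecidableEq ι] [AddCommMonoid M]
    [PartialOrder M] [IsOrderedCancelAddMonoid M] {s : Finset ι} {u : ι → M} {a r : M}
    (hlow : ∀ j ∈ s, a ≤ u j) (hsum : ∑ j ∈ s, u j = s.card • a + r) {i : ι} (hi : i ∈ s) :
    u i ≤ a + r := by
  have hrest : (s.erase i).card • a ≤ ∑ j ∈ s.erase i, u j :=
    card_nsmul_le_sum _ _ _ fun j hj => hlow j (mem_of_mem_erase hj)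
  have hcard : s.card • a = (s.erase i).card • a + a := by
    rw [← card_erase_add_one hi, succ_nsmul]
  refine le_of_add_le_add_left (a := (s.erase i).card • a) ?_
  calc (s.erase i).card • a + u i ≤ ∑ j ∈ s.erase i, u j + u i := add_le_add_left hrest _
    _ = (s.erase i).card • a + (a + r) := by
      rw [add_comm, add_sum_erase s u hi, hsum, hcard, add_assoc]

section Pset

variable {k : ℕ} [NeZero k] {m : ℕ} {u : Fin k → ℕ}

lemma T_le_of_mem_Pset (hu : u ∈ Pset k m) (i : Fin k) : T m ≤ u i :=
  hu.2.1 ▸ hu.1 (Fin.zero_le i)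

lemma le_T_add_of_mem_Pset (hu : u ∈ Pset k m) (i : Fin k) : u i ≤ T m + m := by
  rcases eq_or_ne i 0 with rfl | hi
  · exact hu.2.1.trans_le (Nat.le_add_right _ _)
  have hsum := hu.2.2
  have hcard : (Finset.univ.erase (0 : Fin k)).card = k - 1 := by simp
  rw [← hcard, ← smul_eq_mul] at hsum
  exact Finset.le_add_of_sum_eq_card_nsmul_add (fun j _ => T_le_of_mem_Pset hu j) hsum
    (Finset.mem_erase.2 ⟨hi, Finset.mem_univ i⟩)

lemma mem_Ico_T_of_mem_Pset (hu : u ∈ Pset k m) (i : Fin k) :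
    u i ∈ Set.Ico (T m) (T (m + 1)) :=
  ⟨T_le_of_mem_Pset hu i, T_succ m ▸ Nat.lt_succ_of_le (le_T_add_of_mem_Pset hu i)⟩

end Pset

theorem component_determines_level_general (k : ℕ) [NeZero k] (n m : ℕ)
    (u : Fin k → ℕ) (hu : u ∈ Pset k m) (i : Fin k)
    (h1 : T n ≤ u i) (h2 : u i < T (n + 1)) :
    m = n :=
  T_mono.eq_of_mem_Ico (mem_Ico_T_of_mem_Pset hu i) ⟨h1, h2⟩

/-- Lemma 2, second part: if an integer `t` with `T n ≤ t < T (n+1)`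
appears as a component of some position of `Pₘ`, then `m = n`. -/
theorem component_determines_level (k : ℕ) [NeZero k] (hk : 3 ≤ k) (n m : ℕ)
    (u : Fin k → ℕ) (hu : u ∈ Pset k m) (i : Fin k)
    (h1 : T n ≤ u i) (h2 : u i < T (n + 1)) :
    m = n :=
  component_determines_level_general k n m u hu i h1 h2
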